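/- arXiv:1204.4845 — 5 statements merged into one kernel-verified Lean document; each statement's English description precedes it below -/
import Mathlib

section
/- Let n ≥ 1, let μ : Fin n → ℝ satisfy 0 ≤ μ_j for all j and ∑_j μ_j = 1, and set v = ∑_j μ_j e_j where (e_1, …, e_n) is the standard basis of ℝ^n. Let S be the convex hull of {e_1, …, e_n} and, for each j, let A_j be the convex hull of {e_k : k ≠ j} ∪ {v}. Then the union ⋃_j A_j equals S. -/
/-!
Write `v = ∑ μₖ pₖ` and a point `x` of the hull of the `pₖ` as `x = ∑ wₖ pₖ`, and let `t` be the largest scalar with `t μ ≤ w`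
coordinatewise, attained at an index `j` with `μⱼ > 0`. Then
`x = t v + ∑ₖ (wₖ - t μₖ) pₖ` is a convex combination of `v` and the `pₖ` with `k ≠ j`,
because the coefficient of `pⱼ` vanishes.
-/

open Set Finset Function

section

variable {𝕜 E ι : Type*} [Field 𝕜] [LinearOrder 𝕜] [IsStrictOrderedRing 𝕜]
  [AddCommGroup E] [Module 𝕜 E] [Fintype ι]

theorem exists_weights_of_mem_convexHull_range {p : ι → E} {x : E}
    (hx : x ∈ convexHull 𝕜 (range p)) :
    ∃ w : ι → 𝕜, (∀ i, 0 ≤ w i) ∧ ∑ i, w i = 1 ∧ ∑ i, w i • p i = x := by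
  classical
  rw [convexHull_range_eq_exists_affineCombination] at hx
  obtain ⟨s, w, hw₀, hw₁, rfl⟩ := hx
  refine ⟨fun i ↦ if i ∈ s then w i else 0, fun i ↦ ?_, by simpa [Finset.sum_ite_mem], ?_⟩
  · dsimp only
    split_ifs with hi
    exacts [hw₀ i hi, le_rfl]
  · simp [s.affineCombination_eq_linear_combination p w hw₁, ite_smul, Finset.sum_ite_mem]

theorem exists_max_mul_le {μ w : ι → 𝕜} (hμ : ∃ j, 0 < μ j) (hw : ∀ i, 0 ≤ w i) :
    ∃ j t, 0 ≤ t ∧ (∀ k, t * μ k ≤ w k) ∧ t * μ j = w j := by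
  classical
  obtain ⟨j, hj, hmin⟩ := Finset.exists_min_image {k | 0 < μ k} (fun k ↦ w k / μ k)
    (by simpa [Finset.Nonempty] using hμ)
  have hμj : 0 < μ j := by simpa using hj
  have ht : 0 ≤ w j / μ j := div_nonneg (hw j) hμj.le
  refine ⟨j, w j / μ j, ht, fun k ↦ ?_, div_mul_cancel₀ _ hμj.ne'⟩
  rcases lt_or_ge 0 (μ k) with hμk | hμk
  · exact (le_div_iff₀ hμk).mp (hmin k (by simpa using hμk))
  · exact (mul_nonpos_of_nonneg_of_nonpos ht hμk).trans (hw k)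

theorem sum_smul_mem_convexHull_image_ne_union_singleton {p : ι → E} {μ w : ι → 𝕜}
    (hμ₁ : ∑ i, μ i = 1) (hw₁ : ∑ i, w i = 1) {j : ι} {t : 𝕜} (ht : 0 ≤ t)
    (hle : ∀ k, t * μ k ≤ w k) (heq : t * μ j = w j) :
    ∑ i, w i • p i ∈ convexHull 𝕜 (p '' {k | k ≠ j} ∪ {∑ i, μ i • p i}) := by
  classical
  set v := ∑ i, μ i • p i
  set c : ι → 𝕜 := fun k ↦ w k - t * μ k
  have hcj : c j = 0 := sub_eq_zero.mpr heq.symm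
  have hc : ∑ k, c k = 1 - t := by
    simp [c, Finset.sum_sub_distrib, ← Finset.mul_sum, hw₁, hμ₁]
  have hcp : ∑ k, c k • p k = ∑ k, w k • p k - t • v := by
    simp [c, v, sub_smul, Finset.sum_sub_distrib, Finset.smul_sum, smul_smul]
  -- Replace the point `p j`, which carries weight `c j = 0`, by `v` with weight `t`.
  have hsum : ∑ k, update c j t k • update p j v k = ∑ k, w k • p k := by
    have hterm : ∀ k,
        update c j t k • update p j v k = c k • p k + (Pi.single j (t • v) : ι → E) k := by
      intro k
      rcases eq_or_ne k j with rfl | hk <;> simp [*]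
    simp only [hterm, Finset.sum_add_distrib, Finset.sum_pi_single', Finset.mem_univ, if_true,
      hcp]
    abel
  refine hsum ▸ (convex_convexHull 𝕜 _).sum_mem (fun k _ ↦ ?_) ?_
    fun k _ ↦ subset_convexHull 𝕜 _ ?_
  · rcases eq_or_ne k j with rfl | hk
    · simpa using ht
    · simpa [hk, c] using hle k
  · rw [Finset.sum_update_of_mem (Finset.mem_univ j), Finset.sdiff_singleton_eq_erase,
      Finset.sum_erase _ hcj, hc]
    ring
  · rcases eq_or_ne k j with rfl | hk
    · simp
    · rw [update_of_ne hk]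
      exact Or.inl (mem_image_of_mem p hk)

theorem iUnion_convexHull_image_ne_union_singleton {p : ι → E} {μ : ι → 𝕜}
    (hμ₀ : ∀ i, 0 ≤ μ i) (hμ₁ : ∑ i, μ i = 1) :
    ⋃ j, convexHull 𝕜 (p '' {k | k ≠ j} ∪ {∑ i, μ i • p i}) = convexHull 𝕜 (range p) := by
  have hv : ∑ i, μ i • p i ∈ convexHull 𝕜 (range p) :=
    (convex_convexHull 𝕜 _).sum_mem (fun i _ ↦ hμ₀ i) hμ₁
      fun i _ ↦ subset_convexHull 𝕜 _ (mem_range_self i)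
  refine Subset.antisymm (iUnion_subset fun j ↦ convexHull_min ?_ (convex_convexHull 𝕜 _)) ?_
  · rintro _ (⟨k, -, rfl⟩ | rfl)
    exacts [subset_convexHull 𝕜 _ (mem_range_self k), hv]
  · intro x hx
    obtain ⟨w, hw₀, hw₁, rfl⟩ := exists_weights_of_mem_convexHull_range hx
    have hμ : ∃ j, 0 < μ j := by
      simpa using Finset.exists_lt_of_sum_lt (s := univ) (f := 0) (g := μ) (by simp [hμ₁])
    obtain ⟨j, t, ht, hle, heq⟩ := exists_max_mul_le hμ hw₀
    exact mem_iUnion.mpr ⟨j, sum_smul_mem_convexHull_image_ne_union_singleton hμ₁ hw₁ ht hle heq⟩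

end

theorem stmt2_general (n : ℕ) (μ : Fin n → ℝ)
    (hμ0 : ∀ j, 0 ≤ μ j) (hμ1 : ∑ j, μ j = 1)
    (e : Fin n → EuclideanSpace ℝ (Fin n))
    (v : EuclideanSpace ℝ (Fin n)) (hv : v = ∑ j, μ j • e j)
    (S : Set (EuclideanSpace ℝ (Fin n))) (hS : S = convexHull ℝ (Set.range e))
    (A : Fin n → Set (EuclideanSpace ℝ (Fin n)))
    (hA : ∀ j, A j = convexHull ℝ ((e '' {k | k ≠ j}) ∪ {v})) :
    (⋃ j, A j) = S := by
  subst hv hS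
  simp only [hA]
  exact iUnion_convexHull_image_ne_union_singleton hμ0 hμ1

/-- With `S` the convex hull of the standard basis of `ℝ^n` and
`A j` the convex hull of `{e k : k ≠ j} ∪ {v}`, where `v = ∑ j, μ j • e j` for a
nonnegative `μ` summing to `1`, the union of the `A j` equals `S`. -/
theorem stmt2 (n : ℕ) (hn : 1 ≤ n) (μ : Fin n → ℝ)
    (hμ0 : ∀ j, 0 ≤ μ j) (hμ1 : ∑ j, μ j = 1)
    (e : Fin n → EuclideanSpace ℝ (Fin n))
    (he : ∀ j, e j = EuclideanSpace.single j (1 : ℝ))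
    (v : EuclideanSpace ℝ (Fin n)) (hv : v = ∑ j, μ j • e j)
    (S : Set (EuclideanSpace ℝ (Fin n))) (hS : S = convexHull ℝ (Set.range e))
    (A : Fin n → Set (EuclideanSpace ℝ (Fin n)))
    (hA : ∀ j, A j = convexHull ℝ ((e '' {k | k ≠ j}) ∪ {v})) :
    (⋃ j, A j) = S :=
  stmt2_general n μ hμ0 hμ1 e v hv S hS A hA
end

section
/- Let n ≥ 2, let μ : Fin n → ℝ satisfy 0 ≤ μ_j for all j and ∑_j μ_j = 1, and set v = ∑_j μ_j e_j where (e_1, …, e_n) is the standard basis of ℝ^n. For each j, let A_j be the convex hull of {e_k : k ≠ j} ∪ {v}. Then for all j ≠ k, the (n−1)-dimensional Hausdorff measure of A_j ∩ A_k is zero. -/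
/-!
The functional `x ↦ a x_j - b x_k`, with `a, b ≥ 0` not both zero and `a μ_j = b μ_k`, vanishes
at `v`, is `≤ 0` at every `e_l` with `l ≠ j` and `≥ 0` at every `e_l` with `l ≠ k`. So `A_j` and
`A_k` lie on opposite sides of its kernel, and `A_j ∩ A_k` lies in the affine subspace
`{a x_j = b x_k, ∑ x_i = 1}` of dimension `n - 2`, which is `H^{n-1}`-null.
-/

open MeasureTheory Module Set

section LinearFiber

variable {E F : Type*} [NormedAddCommGroup E] [NormedSpace ℝ E] [FiniteDimensional ℝ E]
  [AddCommGroup F] [Module ℝ F]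

theorem dimH_preimage_singleton_le_finrank_ker (φ : E →ₗ[ℝ] F) (c : F) :
    dimH (φ ⁻¹' {c}) ≤ finrank ℝ (LinearMap.ker φ) := by
  rcases (φ ⁻¹' {c}).eq_empty_or_nonempty with h | h
  · simp [h]
  rw [Real.Convex.dimH_eq_finrank_vectorSpan ((convex_singleton c).linear_preimage φ) h]
  refine Nat.cast_le.2 (Submodule.finrank_mono ?_)
  rw [vectorSpan_def, Submodule.span_le]
  rintro _ ⟨x, hx, y, hy, rfl⟩
  simp_all [LinearMap.mem_ker]

theorem hausdorffMeasure_eq_zero_of_subset_preimage_singleton [MeasurableSpace E] [BorelSpace E]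
    {φ : E →ₗ[ℝ] F} (hφ : Function.Surjective φ) {c : F} {s : Set E} (hs : s ⊆ φ ⁻¹' {c})
    {d : ℝ} (hd : (finrank ℝ E : ℝ) - finrank ℝ F < d) :
    μH[d] s = 0 := by
  have hrank : finrank ℝ F + finrank ℝ (LinearMap.ker φ) = finrank ℝ E := by
    rw [← φ.finrank_range_add_finrank_ker, LinearMap.range_eq_top.2 hφ, finrank_top]
  have hker : (finrank ℝ (LinearMap.ker φ) : ℝ) < d := by
    rw [← hrank] at hd; push_cast at hd; linarith
  rw [← Real.coe_toNNReal d (by linarith [(finrank ℝ (LinearMap.ker φ)).cast_nonneg (α := ℝ)])]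
  refine hausdorffMeasure_of_dimH_lt ((dimH_mono hs).trans_lt ?_)
  refine (dimH_preimage_singleton_le_finrank_ker φ c).trans_lt ?_
  rw [← ENNReal.coe_natCast, ENNReal.coe_lt_coe, Real.lt_toNNReal_iff_coe_lt]
  exact_mod_cast hker

end LinearFiber

section StellarSubdivision

variable {ι : Type*} [Fintype ι]

noncomputable def weightedDiffAndSum (a b : ℝ) (j k : ι) : EuclideanSpace ℝ ι →ₗ[ℝ] ℝ × ℝ :=
  (a • (EuclideanSpace.proj j : EuclideanSpace ℝ ι →L[ℝ] ℝ).toLinearMap -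
    b • (EuclideanSpace.proj k : EuclideanSpace ℝ ι →L[ℝ] ℝ).toLinearMap).prod
    (∑ i, (EuclideanSpace.proj i : EuclideanSpace ℝ ι →L[ℝ] ℝ).toLinearMap)

@[simp]
theorem weightedDiffAndSum_apply (a b : ℝ) (j k : ι) (x : EuclideanSpace ℝ ι) :
    weightedDiffAndSum a b j k x = (a * x j - b * x k, ∑ i, x i) := by
  simp [weightedDiffAndSum]

variable [DecidableEq ι]

def stellarCell (μ : ι → ℝ) (j : ι) : Set (EuclideanSpace ℝ ι) :=
  convexHull ℝ ((fun l => EuclideanSpace.single l 1) '' {l | l ≠ j} ∪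
    {∑ l, μ l • EuclideanSpace.single l 1})

theorem weightedDiffAndSum_surjective {a b : ℝ} (hab : 0 < a + b) {j k : ι} (hjk : j ≠ k) :
    Function.Surjective (weightedDiffAndSum a b j k) := by
  rintro ⟨y, z⟩
  refine ⟨((y + b * z) / (a + b)) • EuclideanSpace.single j 1 +
    ((a * z - y) / (a + b)) • EuclideanSpace.single k 1, ?_⟩
  simp only [weightedDiffAndSum_apply, PiLp.add_apply, PiLp.smul_apply, PiLp.single_apply,
    smul_eq_mul, mul_ite, mul_one, mul_zero, Finset.sum_add_distrib, Finset.sum_ite_eq',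
    Finset.mem_univ, if_true, if_neg hjk, if_neg hjk.symm, Prod.mk.injEq]
  constructor <;> field_simp <;> ring

theorem stellarCell_subset {μ : ι → ℝ} (hμ : ∑ i, μ i = 1) {j k : ι} {a b : ℝ} (hb : 0 ≤ b)
    (hab : a * μ j = b * μ k) :
    stellarCell μ j ⊆ weightedDiffAndSum a b j k ⁻¹' (Iic 0 ×ˢ {1}) := by
  refine convexHull_min ?_ (((convex_Iic 0).prod (convex_singleton 1)).linear_preimage _)
  rintro _ (⟨l, hl, rfl⟩ | rfl)
  · simpa [Ne.symm hl] using ite_nonneg hb le_rfl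
  · rw [mem_preimage, weightedDiffAndSum_apply]
    simp [Pi.single_apply, hab, hμ]

end StellarSubdivision

theorem stmt3_general (n : ℕ) (μ : Fin n → ℝ)
    (hμ0 : ∀ j, 0 ≤ μ j) (hμ1 : ∑ j, μ j = 1)
    (e : Fin n → EuclideanSpace ℝ (Fin n))
    (he : ∀ j, e j = EuclideanSpace.single j (1 : ℝ))
    (v : EuclideanSpace ℝ (Fin n)) (hv : v = ∑ j, μ j • e j)
    (A : Fin n → Set (EuclideanSpace ℝ (Fin n)))
    (hA : ∀ j, A j = convexHull ℝ ((e '' {k | k ≠ j}) ∪ {v})) :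
    ∀ j k : Fin n, j ≠ k →
      Measure.hausdorffMeasure ((n : ℝ) - 1) (A j ∩ A k) = 0 := by
  intro j k hjk
  obtain rfl : e = fun l => EuclideanSpace.single l 1 := funext he
  subst hv
  obtain rfl : A = stellarCell μ := funext hA
  obtain ⟨a, b, ha, hb, hab, hμab⟩ : ∃ a b : ℝ, 0 ≤ a ∧ 0 ≤ b ∧ 0 < a + b ∧ a * μ j = b * μ k := by
    rcases (hμ0 j).eq_or_lt with hj | hj
    · exact ⟨1, 0, zero_le_one, le_rfl, by norm_num, by simp [← hj]⟩
    · exact ⟨μ k, μ j, hμ0 k, hj.le, by linarith [hμ0 k], mul_comm _ _⟩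
  refine hausdorffMeasure_eq_zero_of_subset_preimage_singleton
    (weightedDiffAndSum_surjective hab hjk) (c := (0, 1)) ?_ (by simp)
  rintro x ⟨hxj, hxk⟩
  have hj := stellarCell_subset hμ1 hb hμab hxj
  have hk := stellarCell_subset hμ1 ha hμab.symm hxk
  simp only [mem_preimage, weightedDiffAndSum_apply, mem_prod, mem_Iic, mem_singleton_iff] at hj hk ⊢
  exact Prod.ext (by linarith) hj.2

/-- With `A j` the convex hull of `{e k : k ≠ j} ∪ {v}`, where
`v = ∑ j, μ j • e j` for a nonnegative `μ` summing to `1` and `n ≥ 2`, the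
`(n-1)`-dimensional Hausdorff measure of `A j ∩ A k` is zero for `j ≠ k`. -/
theorem stmt3 (n : ℕ) (hn : 2 ≤ n) (μ : Fin n → ℝ)
    (hμ0 : ∀ j, 0 ≤ μ j) (hμ1 : ∑ j, μ j = 1)
    (e : Fin n → EuclideanSpace ℝ (Fin n))
    (he : ∀ j, e j = EuclideanSpace.single j (1 : ℝ))
    (v : EuclideanSpace ℝ (Fin n)) (hv : v = ∑ j, μ j • e j)
    (A : Fin n → Set (EuclideanSpace ℝ (Fin n)))
    (hA : ∀ j, A j = convexHull ℝ ((e '' {k | k ≠ j}) ∪ {v})) :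
    ∀ j k : Fin n, j ≠ k →
      Measure.hausdorffMeasure ((n : ℝ) - 1) (A j ∩ A k) = 0 :=
  stmt3_general n μ hμ0 hμ1 e he v hv A hA
end

section
/- Let n ≥ 2, let μ : Fin n → ℝ satisfy 0 < μ_j for all j and ∑_j μ_j = 1, and set v = ∑_j μ_j e_j where (e_1, …, e_n) is the standard basis of ℝ^n. For each j, let A_j be the convex hull of {e_k : k ≠ j} ∪ {v}. Then for all j ≠ k, the intersection A_j ∩ A_k equals the convex hull of {e_l : l ≠ j, l ≠ k} ∪ {v}. -/
/-!
Every point `x` of `A j` lies in the standard simplex and has `x j / μ j` as the least of the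
ratios `x l / μ l`: both properties hold at the vertices `e k` (`k ≠ j`) and `v`, and both are
convex. On `A j ∩ A k` the ratios at `j` and `k` are thus both equal to the minimum `t`, so
`x = t • v + ∑ l, (x l - t * μ l) • e l` is a convex combination of `v` and the `e l` in which
the coefficients of `e j` and `e k` vanish.
-/

open Finset

lemma smul_add_sum_smul_mem_convexHull {R E ι : Type*} [Field R] [LinearOrder R]
    [IsStrictOrderedRing R] [AddCommGroup E] [Module R E] (v : E) (e : ι → E) (s : Finset ι)
    {t : R} {c : ι → R} (ht : 0 ≤ t) (hc : ∀ l ∈ s, 0 ≤ c l) (hsum : t + ∑ l ∈ s, c l = 1) :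
    t • v + ∑ l ∈ s, c l • e l ∈ convexHull R (e '' s ∪ {v}) := by
  have key := (convex_convexHull R (e '' s ∪ {v})).sum_mem (t := s.insertNone)
    (w := fun o => o.elim t c) (z := fun o => o.elim v e)
    (forall_mem_insertNone.2 ⟨ht, hc⟩) (by simpa [sum_insertNone] using hsum)
    (forall_mem_insertNone.2 ⟨subset_convexHull R _ (Or.inr rfl),
      fun l hl => subset_convexHull R _ (Or.inl ⟨l, hl, rfl⟩)⟩)
  simpa [sum_insertNone] using key

section

variable {ι : Type*} [Fintype ι] {μ : ι → ℝ}

/-- The points of the standard simplex at which `x i / μ i` is the least of the ratios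
`x l / μ l`, written without division. -/
def minRatioCell (μ : ι → ℝ) (i : ι) : Set (EuclideanSpace ℝ ι) :=
  {x | (∀ l, 0 ≤ x l) ∧ ∑ l, x l = 1 ∧ ∀ l, x i * μ l ≤ x l * μ i}

lemma convex_minRatioCell (μ : ι → ℝ) (i : ι) : Convex ℝ (minRatioCell μ i) := by
  rintro x ⟨hx0, hx1, hxμ⟩ y ⟨hy0, hy1, hyμ⟩ a b ha hb hab
  simp only [minRatioCell, Set.mem_ofPred_eq, PiLp.add_apply, PiLp.smul_apply, smul_eq_mul]
  refine ⟨fun l => ?_, ?_, fun l => ?_⟩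
  · exact add_nonneg (mul_nonneg ha (hx0 l)) (mul_nonneg hb (hy0 l))
  · rw [sum_add_distrib, ← mul_sum, ← mul_sum, hx1, hy1, mul_one, mul_one, hab]
  · nlinarith [mul_le_mul_of_nonneg_left (hxμ l) ha, mul_le_mul_of_nonneg_left (hyμ l) hb]

variable [DecidableEq ι]

lemma EuclideanSpace.sum_smul_single_one_apply (c : ι → ℝ) (m : ι) :
    (∑ l, c l • EuclideanSpace.single l (1 : ℝ)) m = c m := by
  simp [Pi.single_apply]

lemma single_one_mem_minRatioCell {i l : ι} (hμ : 0 ≤ μ i) (hl : l ≠ i) :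
    EuclideanSpace.single l (1 : ℝ) ∈ minRatioCell μ i := by
  refine ⟨fun m => ?_, by simp, fun m => ?_⟩
  · simp only [PiLp.single_apply]; split_ifs <;> norm_num
  · simp only [PiLp.single_apply, if_neg hl.symm, zero_mul]
    split_ifs <;> simp [hμ]

lemma sum_smul_single_one_mem_minRatioCell (hμ0 : ∀ l, 0 ≤ μ l) (hμ1 : ∑ l, μ l = 1)
    (i : ι) : ∑ l, μ l • EuclideanSpace.single l (1 : ℝ) ∈ minRatioCell μ i := by
  simp only [minRatioCell, Set.mem_ofPred_eq, EuclideanSpace.sum_smul_single_one_apply]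
  exact ⟨hμ0, hμ1, fun l => (mul_comm _ _).le⟩

lemma convexHull_subset_minRatioCell (hμ0 : ∀ l, 0 ≤ μ l) (hμ1 : ∑ l, μ l = 1) (i : ι) :
    convexHull ℝ ((fun l => EuclideanSpace.single l (1 : ℝ)) '' {l | l ≠ i} ∪
      {∑ l, μ l • EuclideanSpace.single l (1 : ℝ)}) ⊆ minRatioCell μ i :=
  convexHull_min
    (Set.union_subset (Set.image_subset_iff.2 fun _ hl => single_one_mem_minRatioCell (hμ0 i) hl)
      (Set.singleton_subset_iff.2 (sum_smul_single_one_mem_minRatioCell hμ0 hμ1 i)))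
    (convex_minRatioCell μ i)

lemma mem_convexHull_of_mem_minRatioCell_inter {j k : ι} (hμj : 0 < μ j)
    (hμ1 : ∑ l, μ l = 1) {x : EuclideanSpace ℝ ι}
    (hx : x ∈ minRatioCell μ j ∩ minRatioCell μ k) :
    x ∈ convexHull ℝ ((fun l => EuclideanSpace.single l (1 : ℝ)) '' {l | l ≠ j ∧ l ≠ k} ∪
      {∑ l, μ l • EuclideanSpace.single l (1 : ℝ)}) := by
  obtain ⟨⟨hx0, hx1, hxj⟩, -, -, hxk⟩ := hx
  set t := x j / μ j
  have htμ (l : ι) : t * μ l ≤ x l := by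
    rw [div_mul_eq_mul_div, div_le_iff₀ hμj]; exact hxj l
  have htj : x j = t * μ j := (div_mul_cancel₀ _ hμj.ne').symm
  have htk : x k = t * μ k := by
    refine le_antisymm ?_ (htμ k)
    rw [div_mul_eq_mul_div, le_div_iff₀ hμj]; exact hxk j
  set c := fun l => x l - t * μ l
  have hc_support (l : ι) (hl : c l ≠ 0) : l ≠ j ∧ l ≠ k := by
    refine ⟨?_, ?_⟩ <;> rintro rfl <;> simp [c, htj, htk] at hl
  have hx_eq : x = t • ∑ l, μ l • EuclideanSpace.single l (1 : ℝ) +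
      ∑ l with l ≠ j ∧ l ≠ k, c l • EuclideanSpace.single l (1 : ℝ) := by
    rw [sum_filter_of_ne fun l _ hl => hc_support l (left_ne_zero_of_smul hl)]
    ext m
    simp [EuclideanSpace.sum_smul_single_one_apply, c]
  rw [hx_eq]
  convert smul_add_sum_smul_mem_convexHull _ _ _ (div_nonneg (hx0 j) hμj.le)
    (fun l _ => sub_nonneg.2 (htμ l)) ?_ using 3
  · simp
  · rw [sum_filter_of_ne fun l _ hl => hc_support l hl]
    simp [c, t, sum_sub_distrib, hx1, ← mul_sum, hμ1]

end

theorem stmt4_general (n : ℕ) (μ : Fin n → ℝ)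
    (hμ0 : ∀ j, 0 < μ j) (hμ1 : ∑ j, μ j = 1)
    (e : Fin n → EuclideanSpace ℝ (Fin n))
    (he : ∀ j, e j = EuclideanSpace.single j (1 : ℝ))
    (v : EuclideanSpace ℝ (Fin n)) (hv : v = ∑ j, μ j • e j)
    (A : Fin n → Set (EuclideanSpace ℝ (Fin n)))
    (hA : ∀ j, A j = convexHull ℝ ((e '' {k | k ≠ j}) ∪ {v})) :
    ∀ j k : Fin n, j ≠ k →
      A j ∩ A k = convexHull ℝ ((e '' {l | l ≠ j ∧ l ≠ k}) ∪ {v}) := by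
  intro j k _
  obtain rfl : e = fun l => EuclideanSpace.single l 1 := funext he
  subst hv
  have hμ0' (l : Fin n) : 0 ≤ μ l := (hμ0 l).le
  rw [hA j, hA k]
  refine subset_antisymm (fun x hx => ?_) (Set.subset_inter ?_ ?_)
  · exact mem_convexHull_of_mem_minRatioCell_inter (hμ0 j) hμ1
      ⟨convexHull_subset_minRatioCell hμ0' hμ1 j hx.1,
        convexHull_subset_minRatioCell hμ0' hμ1 k hx.2⟩
  · exact convexHull_mono (Set.union_subset_union_left _ (Set.image_mono fun _ hl => hl.1))
  · exact convexHull_mono (Set.union_subset_union_left _ (Set.image_mono fun _ hl => hl.2))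

/-- With `A j` the convex hull of `{e k : k ≠ j} ∪ {v}`, where
`v = ∑ j, μ j • e j` for a strictly positive `μ` summing to `1` and `n ≥ 2`,
for `j ≠ k` the intersection `A j ∩ A k` is the convex hull of
`{e l : l ≠ j, l ≠ k} ∪ {v}`. -/
theorem stmt4 (n : ℕ) (hn : 2 ≤ n) (μ : Fin n → ℝ)
    (hμ0 : ∀ j, 0 < μ j) (hμ1 : ∑ j, μ j = 1)
    (e : Fin n → EuclideanSpace ℝ (Fin n))
    (he : ∀ j, e j = EuclideanSpace.single j (1 : ℝ))
    (v : EuclideanSpace ℝ (Fin n)) (hv : v = ∑ j, μ j • e j)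
    (A : Fin n → Set (EuclideanSpace ℝ (Fin n)))
    (hA : ∀ j, A j = convexHull ℝ ((e '' {k | k ≠ j}) ∪ {v})) :
    ∀ j k : Fin n, j ≠ k →
      A j ∩ A k = convexHull ℝ ((e '' {l | l ≠ j ∧ l ≠ k}) ∪ {v}) :=
  stmt4_general n μ hμ0 hμ1 e he v hv A hA
end

section
/- Let n ≥ 2, let μ : Fin n → ℝ satisfy 0 < μ_j for all j and ∑_j μ_j = 1, and set v = ∑_j μ_j e_j where (e_1, …, e_n) is the standard basis of ℝ^n. For each j, let A_j be the convex hull of {e_k : k ≠ j} ∪ {v}. Then for all j ≠ k, the intrinsic (relative) interiors of A_j and A_k are disjoint. -/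
/-!
The functional `f x = μ k * x j - μ j * x k` vanishes at `v`, is `≤ 0` on every vertex of `A j`
and `≥ 0` on every vertex of `A k`, so it separates the two hulls and vanishes at any common point.
A linear functional attaining its maximum over a set at a relative interior point is constant
on that set; but `f (e k) = -μ j < 0` while `e k ∈ A j`.
-/

open Set

section IntrinsicInterior

variable {V : Type*} [AddCommGroup V] [Module ℝ V] [TopologicalSpace V]
  [IsTopologicalAddGroup V] [ContinuousSMul ℝ V] {s : Set V} {x y : V}

lemma exists_pos_add_smul_sub_mem_of_mem_intrinsicInterior (hx : x ∈ intrinsicInterior ℝ s)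
    (hy : y ∈ s) : ∃ t : ℝ, 0 < t ∧ x + t • (x - y) ∈ s := by
  obtain ⟨x, hx, rfl⟩ := hx
  have hline (t : ℝ) : (x : V) + t • ((x : V) - y) ∈ affineSpan ℝ s := by
    simpa [add_comm] using
      (affineSpan ℝ s).smul_vsub_vadd_mem t x.2 (subset_affineSpan ℝ s hy) x.2
  let g : ℝ → affineSpan ℝ s := fun t => ⟨x + t • (x - y), hline t⟩
  have hg : Continuous g := by fun_prop
  have hg0 : g 0 = x := by simp [g]
  have hev : ∀ᶠ t in nhds (0 : ℝ), g t ∈ interior ((↑) ⁻¹' s) :=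
    hg.continuousAt.preimage_mem_nhds (hg0 ▸ isOpen_interior.mem_nhds hx)
  obtain ⟨t, ht, hts⟩ := hev.exists_gt
  exact ⟨t, ht, interior_subset (s := ((↑) ⁻¹' s : Set (affineSpan ℝ s))) hts⟩

lemma IsMaxOn.apply_eq_of_mem_intrinsicInterior {f : V →ₗ[ℝ] ℝ} (hmax : IsMaxOn f s x)
    (hx : x ∈ intrinsicInterior ℝ s) (hy : y ∈ s) : f y = f x := by
  obtain ⟨t, ht, hts⟩ := exists_pos_add_smul_sub_mem_of_mem_intrinsicInterior hx hy
  have hle : f (x + t • (x - y)) ≤ f x := hmax hts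
  rw [map_add, map_smul, map_sub, smul_eq_mul] at hle
  have hxy : f x ≤ f y := by nlinarith
  exact le_antisymm (hmax hy) hxy

lemma disjoint_intrinsicInterior_of_separating {t : Set V} (f : V →ₗ[ℝ] ℝ)
    (hs : ∀ z ∈ s, f z ≤ 0) (ht : ∀ z ∈ t, 0 ≤ f z) (hy : y ∈ s) (hfy : f y < 0) :
    Disjoint (intrinsicInterior ℝ s) (intrinsicInterior ℝ t) := by
  refine disjoint_left.2 fun x hxs hxt => hfy.ne ?_
  have hfx : f x = 0 :=
    le_antisymm (hs x (intrinsicInterior_subset hxs)) (ht x (intrinsicInterior_subset hxt))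
  have hmax : IsMaxOn f s x := fun z hz => by simpa [hfx] using hs z hz
  rw [hmax.apply_eq_of_mem_intrinsicInterior hxs hy, hfx]

end IntrinsicInterior

section Simplex

variable {n : ℕ} (μ : Fin n → ℝ)

noncomputable def twoCoordFunctional (j k : Fin n) : EuclideanSpace ℝ (Fin n) →ₗ[ℝ] ℝ :=
  μ k • (EuclideanSpace.proj j : EuclideanSpace ℝ (Fin n) →L[ℝ] ℝ).toLinearMap -
    μ j • (EuclideanSpace.proj k : EuclideanSpace ℝ (Fin n) →L[ℝ] ℝ).toLinearMap

lemma twoCoordFunctional_apply (j k : Fin n) (x : EuclideanSpace ℝ (Fin n)) :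
    twoCoordFunctional μ j k x = μ k * x j - μ j * x k := by
  simp [twoCoordFunctional]

lemma twoCoordFunctional_weightedSum (j k : Fin n) :
    twoCoordFunctional μ j k (∑ i, μ i • EuclideanSpace.single i 1) = 0 := by
  simp [twoCoordFunctional_apply, PiLp.single_apply, mul_sub, Finset.sum_sub_distrib, mul_comm]

lemma twoCoordFunctional_single (j k l : Fin n) :
    twoCoordFunctional μ j k (EuclideanSpace.single l 1) =
      (if j = l then μ k else 0) - if k = l then μ j else 0 := by
  simp [twoCoordFunctional_apply, PiLp.single_apply]

lemma twoCoordFunctional_single_nonpos {j k l : Fin n} (hj : 0 ≤ μ j) (hl : l ≠ j) :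
    twoCoordFunctional μ j k (EuclideanSpace.single l 1) ≤ 0 := by
  rw [twoCoordFunctional_single, if_neg hl.symm]
  split_ifs <;> linarith

lemma twoCoordFunctional_single_nonneg {j k l : Fin n} (hk : 0 ≤ μ k) (hl : l ≠ k) :
    0 ≤ twoCoordFunctional μ j k (EuclideanSpace.single l 1) := by
  rw [twoCoordFunctional_single, if_neg hl.symm]
  split_ifs <;> linarith

lemma twoCoordFunctional_single_right {j k : Fin n} (hjk : j ≠ k) :
    twoCoordFunctional μ j k (EuclideanSpace.single k 1) = -μ j := by
  simp [twoCoordFunctional_single, hjk]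

end Simplex

theorem stmt5_general (n : ℕ) (μ : Fin n → ℝ)
    (hμ0 : ∀ j, 0 < μ j)
    (e : Fin n → EuclideanSpace ℝ (Fin n))
    (he : ∀ j, e j = EuclideanSpace.single j (1 : ℝ))
    (v : EuclideanSpace ℝ (Fin n)) (hv : v = ∑ j, μ j • e j)
    (A : Fin n → Set (EuclideanSpace ℝ (Fin n)))
    (hA : ∀ j, A j = convexHull ℝ ((e '' {k | k ≠ j}) ∪ {v})) :
    ∀ j k : Fin n, j ≠ k →
      Disjoint (intrinsicInterior ℝ (A j)) (intrinsicInterior ℝ (A k)) := by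
  intro j k hjk
  obtain rfl : e = fun i => EuclideanSpace.single i 1 := funext he
  subst hv
  set f := twoCoordFunctional μ j k
  have hAj : A j ⊆ {x | f x ≤ 0} := by
    refine hA j ▸ convexHull_min ?_ (convex_halfSpace_le f.isLinear 0)
    rintro _ (⟨l, hl, rfl⟩ | rfl)
    · exact twoCoordFunctional_single_nonpos μ (hμ0 j).le hl
    · exact (twoCoordFunctional_weightedSum μ j k).le
  have hAk : A k ⊆ {x | 0 ≤ f x} := by
    refine hA k ▸ convexHull_min ?_ (convex_halfSpace_ge f.isLinear 0)
    rintro _ (⟨l, hl, rfl⟩ | rfl)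
    · exact twoCoordFunctional_single_nonneg μ (hμ0 k).le hl
    · exact (twoCoordFunctional_weightedSum μ j k).ge
  have hekj : EuclideanSpace.single k 1 ∈ A j :=
    hA j ▸ subset_convexHull ℝ _ (Or.inl ⟨k, hjk.symm, rfl⟩)
  refine disjoint_intrinsicInterior_of_separating f hAj hAk hekj ?_
  rw [twoCoordFunctional_single_right μ hjk]
  exact neg_neg_of_pos (hμ0 j)

/-- With `A j` the convex hull of `{e k : k ≠ j} ∪ {v}`, where
`v = ∑ j, μ j • e j` for a strictly positive `μ` summing to `1` and `n ≥ 2`,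
the intrinsic interiors of `A j` and `A k` are disjoint for `j ≠ k`. -/
theorem stmt5 (n : ℕ) (hn : 2 ≤ n) (μ : Fin n → ℝ)
    (hμ0 : ∀ j, 0 < μ j) (hμ1 : ∑ j, μ j = 1)
    (e : Fin n → EuclideanSpace ℝ (Fin n))
    (he : ∀ j, e j = EuclideanSpace.single j (1 : ℝ))
    (v : EuclideanSpace ℝ (Fin n)) (hv : v = ∑ j, μ j • e j)
    (A : Fin n → Set (EuclideanSpace ℝ (Fin n)))
    (hA : ∀ j, A j = convexHull ℝ ((e '' {k | k ≠ j}) ∪ {v})) :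
    ∀ j k : Fin n, j ≠ k →
      Disjoint (intrinsicInterior ℝ (A j)) (intrinsicInterior ℝ (A k)) :=
  stmt5_general n μ hμ0 e he v hv A hA
end

section
/- Let n ≥ 2, let μ : Fin n → ℝ satisfy 0 ≤ μ_j for all j and ∑_j μ_j = 1, and set v = ∑_j μ_j e_j where (e_1, …, e_n) is the standard basis of ℝ^n. Let S be the convex hull of {e_1, …, e_n} and, for each j, let A_j be the convex hull of {e_k : k ≠ j} ∪ {v}. Let P be the uniform probability measure on S, i.e. the (n−1)-dimensional Hausdorff measure restricted to S and normalized by H^{n−1}(S) (which is finite and nonzero). Then for every j, P(A_j) = μ_j. -/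
/-!
Inside the hyperplane `∑ i, x i = 1` (isometric to `ℝ^(n-1)`, where `H^(n-1)` is a Haar measure),
`A j` is the image of the simplex `S` under the affine map fixing `e k` for `k ≠ j` and sending
`e j` to `v`. Its linear part is a rank-one perturbation of the identity whose determinant is the
barycentric coordinate `μ j` of `v`, so `H^(n-1) (A j) = μ j * H^(n-1) S`.
-/

open MeasureTheory Set Module Function

theorem LinearMap.det_id_add_smulRight {R M : Type*} [CommRing R] [AddCommGroup M] [Module R M]
    [Module.Free R M] [Module.Finite R M] (f : M →ₗ[R] R) (c : M) :
    LinearMap.det (LinearMap.id + f.smulRight c) = 1 + f c := by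
  let B := Module.Free.chooseBasis R M
  rw [← LinearMap.det_toMatrix B, map_add, LinearMap.toMatrix_id, LinearMap.toMatrix_smulRight,
    Matrix.vecMulVec_eq Unit, Matrix.det_one_add_replicateCol_mul_replicateRow]
  conv_rhs => rw [← B.sum_repr c, map_sum]
  simp [dotProduct, mul_comm]

section AddHaar

variable {E : Type*} [NormedAddCommGroup E] [NormedSpace ℝ E] [MeasurableSpace E] [BorelSpace E]
  [FiniteDimensional ℝ E] (ν : Measure E) [ν.IsAddHaarMeasure]

theorem MeasureTheory.Measure.addHaar_image_affineMap (f : E →ᵃ[ℝ] E) (s : Set E) :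
    ν (f '' s) = ENNReal.ofReal |LinearMap.det f.linear| * ν s := by
  rw [f.decomp, show ⇑f.linear + (fun _ => f 0) = (· + f 0) ∘ f.linear from rfl, image_comp,
    image_add_right, measure_preimage_add_right, addHaar_image_linearMap]

theorem AffineBasis.addHaar_convexHull_update {ι : Type*} [Fintype ι] [DecidableEq ι]
    (b : AffineBasis ι ℝ E) (j : ι) (q : E) :
    ν (convexHull ℝ (range (update b j q))) =
      ENNReal.ofReal |b.coord j q| * ν (convexHull ℝ (range b)) := by
  -- `G` fixes every vertex but `b j`, which it sends to `q`.
  let G : E →ᵃ[ℝ] E := AffineMap.id ℝ E + (AffineMap.lineMap 0 (q - b j)).comp (b.coord j)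
  have hG : ⇑G ∘ ⇑b = update b j q := by
    funext k
    rcases eq_or_ne k j with rfl | hk
    · simp [G, b.coord_apply_eq]
    · simp [G, b.coord_apply_ne hk.symm, hk]
  have hGlin : G.linear = LinearMap.id + (b.coord j).linear.smulRight (q - b j) := by
    ext x
    simp [G, AffineMap.lineMap_linear]
  have hdet : LinearMap.det G.linear = b.coord j q := by
    rw [hGlin, LinearMap.det_id_add_smulRight, ← vsub_eq_sub, AffineMap.linearMap_vsub,
      vsub_eq_sub, b.coord_apply_eq, add_sub_cancel]
  rw [← hG, range_comp, ← G.image_convexHull, ν.addHaar_image_affineMap, hdet]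

end AddHaar

section Hausdorff

variable {E : Type*} [NormedAddCommGroup E] [NormedSpace ℝ E] [MeasurableSpace E] [BorelSpace E]
  {ι : Type*} [Fintype ι] {p : ι → E} {d : ℕ}

theorem AffineIndependent.exists_isometry_comp_affineBasis (hp : AffineIndependent ℝ p)
    (hd : d + 1 = Fintype.card ι) :
    ∃ (V : Submodule ℝ E) (b : AffineBasis ι ℝ V) (F : V →ᵃ[ℝ] E),
      FiniteDimensional ℝ V ∧ (μH[d] : Measure V).IsAddHaarMeasure ∧ Isometry F ∧ ⇑F ∘ ⇑b = p := by
  have : Nonempty ι := Fintype.card_pos_iff.mp (by omega)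
  let i₀ := Classical.arbitrary ι
  let V := vectorSpan ℝ (range p)
  let F : V →ᵃ[ℝ] E := V.subtype.toAffineMap + AffineMap.const ℝ V (p i₀)
  let w : ι → V := fun i =>
    ⟨p i - p i₀, vsub_mem_vectorSpan ℝ (mem_range_self i) (mem_range_self i₀)⟩
  have hFw : ⇑F ∘ w = p := funext fun i => sub_add_cancel (p i) (p i₀)
  have hw : AffineIndependent ℝ w := AffineIndependent.of_comp F (hFw ▸ hp)
  have hdim : finrank ℝ V = d := hp.finrank_vectorSpan hd.symm
  have hspan : affineSpan ℝ (range w) = ⊤ :=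
    hw.affineSpan_eq_top_iff_card_eq_finrank_add_one.mpr (by rw [hdim, hd])
  refine ⟨V, ⟨w, hw, hspan⟩, F, inferInstance, hdim ▸ isAddHaarMeasure_hausdorffMeasure, ?_, hFw⟩
  exact Isometry.of_dist_eq fun x y => by simp [F, dist_add_right, Subtype.dist_eq]

omit [Fintype ι] in
theorem Isometry.hausdorffMeasure_convexHull_range_comp {V : Type*} [NormedAddCommGroup V]
    [NormedSpace ℝ V] [MeasurableSpace V] [BorelSpace V] {F : V →ᵃ[ℝ] E} (hF : Isometry F)
    (x : ι → V) :
    μH[d] (convexHull ℝ (range (F ∘ x))) = μH[d] (convexHull ℝ (range x)) := by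
  rw [range_comp, ← F.image_convexHull, hF.hausdorffMeasure_image (Or.inl d.cast_nonneg)]

theorem AffineIndependent.hausdorffMeasure_convexHull_update [DecidableEq ι]
    (hp : AffineIndependent ℝ p) (hd : d + 1 = Fintype.card ι) (j : ι) {w : ι → ℝ}
    (hw : ∑ i, w i = 1) :
    μH[d] (convexHull ℝ (range (update p j (Finset.univ.affineCombination ℝ p w)))) =
      ENNReal.ofReal |w j| * μH[d] (convexHull ℝ (range p)) := by
  obtain ⟨V, b, F, _, _, hF, rfl⟩ := hp.exists_isometry_comp_affineBasis hd
  rw [← Finset.univ.map_affineCombination b w hw, ← comp_update,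
    hF.hausdorffMeasure_convexHull_range_comp, hF.hausdorffMeasure_convexHull_range_comp,
    b.addHaar_convexHull_update μH[d], b.coord_apply_combination_of_mem (Finset.mem_univ j) hw]

theorem AffineIndependent.hausdorffMeasure_convexHull_pos (hp : AffineIndependent ℝ p)
    (hd : d + 1 = Fintype.card ι) : 0 < μH[d] (convexHull ℝ (range p)) := by
  obtain ⟨V, b, F, _, _, hF, rfl⟩ := hp.exists_isometry_comp_affineBasis hd
  rw [hF.hausdorffMeasure_convexHull_range_comp]
  exact Measure.measure_pos_of_nonempty_interior _ ⟨_, b.centroid_mem_interior_convexHull⟩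

theorem AffineIndependent.hausdorffMeasure_convexHull_lt_top (hp : AffineIndependent ℝ p)
    (hd : d + 1 = Fintype.card ι) : μH[d] (convexHull ℝ (range p)) < ⊤ := by
  obtain ⟨V, b, F, _, _, hF, rfl⟩ := hp.exists_isometry_comp_affineBasis hd
  rw [hF.hausdorffMeasure_convexHull_range_comp]
  exact ((finite_range b).isCompact_convexHull ℝ).measure_lt_top

end Hausdorff

theorem Set.range_update_eq_image_union {α β : Type*} [DecidableEq α] (f : α → β) (a : α) (b : β) :
    range (update f a b) = f '' {x | x ≠ a} ∪ {b} := by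
  ext y
  constructor
  · rintro ⟨x, rfl⟩
    rcases eq_or_ne x a with rfl | hx
    · simp
    · exact Or.inl ⟨x, hx, (update_of_ne hx b f).symm⟩
  · rintro (⟨x, hx, rfl⟩ | rfl)
    · exact ⟨x, update_of_ne hx b f⟩
    · exact ⟨a, update_self _ _ _⟩

theorem stmt7_general (n : ℕ) (μ : Fin n → ℝ)
    (hμ0 : ∀ j, 0 ≤ μ j) (hμ1 : ∑ j, μ j = 1)
    (e : Fin n → EuclideanSpace ℝ (Fin n))
    (he : ∀ j, e j = EuclideanSpace.single j (1 : ℝ))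
    (v : EuclideanSpace ℝ (Fin n)) (hv : v = ∑ j, μ j • e j)
    (S : Set (EuclideanSpace ℝ (Fin n))) (hS : S = convexHull ℝ (Set.range e))
    (A : Fin n → Set (EuclideanSpace ℝ (Fin n)))
    (hA : ∀ j, A j = convexHull ℝ ((e '' {k | k ≠ j}) ∪ {v}))
    (P : Measure (EuclideanSpace ℝ (Fin n)))
    (hP : P = (Measure.hausdorffMeasure ((n : ℝ) - 1) S)⁻¹
            • (Measure.hausdorffMeasure ((n : ℝ) - 1)).restrict S) :
    Measure.hausdorffMeasure ((n : ℝ) - 1) S ≠ 0 ∧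
    Measure.hausdorffMeasure ((n : ℝ) - 1) S ≠ ⊤ ∧
    ∀ j : Fin n, P (A j) = ENNReal.ofReal (μ j) := by
  subst hS hP
  have hn : 1 ≤ n := Nat.one_le_iff_ne_zero.mpr fun h => by subst h; simp at hμ1
  have hd : n - 1 + 1 = Fintype.card (Fin n) := by rw [Fintype.card_fin, Nat.sub_add_cancel hn]
  have he_indep : AffineIndependent ℝ e := by
    have : e = EuclideanSpace.basisFun (Fin n) ℝ := funext fun j => by simp [he]
    exact this ▸ (EuclideanSpace.basisFun (Fin n) ℝ).toBasis.linearIndependent.affineIndependent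
  have hv_comb : v = Finset.univ.affineCombination ℝ e μ :=
    hv.trans (Finset.univ.affineCombination_eq_linear_combination e μ hμ1).symm
  have hv_mem : v ∈ convexHull ℝ (range e) := hv ▸
    (convex_convexHull ℝ _).sum_mem (fun i _ => hμ0 i) hμ1
      (fun i _ => subset_convexHull ℝ _ (mem_range_self i))
  have hA_sub : ∀ j, A j ⊆ convexHull ℝ (range e) := fun j => by
    rw [hA j, (convex_convexHull ℝ _).convexHull_subset_iff]
    exact union_subset ((image_subset_range e _).trans (subset_convexHull ℝ _))
      (singleton_subset_iff.mpr hv_mem)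
  rw [show (n : ℝ) - 1 = (n - 1 : ℕ) by rw [Nat.cast_sub hn, Nat.cast_one]]
  have hpos := he_indep.hausdorffMeasure_convexHull_pos hd
  have hfin := he_indep.hausdorffMeasure_convexHull_lt_top hd
  refine ⟨hpos.ne', hfin.ne, fun j => ?_⟩
  rw [Measure.smul_apply, Measure.restrict_eq_self _ (hA_sub j), hA j,
    ← range_update_eq_image_union, hv_comb, he_indep.hausdorffMeasure_convexHull_update hd j hμ1,
    abs_of_nonneg (hμ0 j), smul_eq_mul, mul_left_comm, ENNReal.inv_mul_cancel hpos.ne' hfin.ne,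
    mul_one]

/-- With `S` the standard simplex of `ℝ^n` and `A j` the convex hull of
`{e k : k ≠ j} ∪ {v}`, where `v = ∑ j, μ j • e j` for a nonnegative `μ` summing to `1`
and `n ≥ 2`: the `(n-1)`-dimensional Hausdorff measure of `S` is nonzero and finite, and
the uniform probability measure `P` on `S` (the restriction of `H^{n-1}` to `S`,
normalized by `H^{n-1}(S)`) satisfies `P (A j) = μ j` for every `j`. -/
theorem stmt7 (n : ℕ) (hn : 2 ≤ n) (μ : Fin n → ℝ)
    (hμ0 : ∀ j, 0 ≤ μ j) (hμ1 : ∑ j, μ j = 1)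
    (e : Fin n → EuclideanSpace ℝ (Fin n))
    (he : ∀ j, e j = EuclideanSpace.single j (1 : ℝ))
    (v : EuclideanSpace ℝ (Fin n)) (hv : v = ∑ j, μ j • e j)
    (S : Set (EuclideanSpace ℝ (Fin n))) (hS : S = convexHull ℝ (Set.range e))
    (A : Fin n → Set (EuclideanSpace ℝ (Fin n)))
    (hA : ∀ j, A j = convexHull ℝ ((e '' {k | k ≠ j}) ∪ {v}))
    (P : Measure (EuclideanSpace ℝ (Fin n)))
    (hP : P = (Measure.hausdorffMeasure ((n : ℝ) - 1) S)⁻¹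
            • (Measure.hausdorffMeasure ((n : ℝ) - 1)).restrict S) :
    Measure.hausdorffMeasure ((n : ℝ) - 1) S ≠ 0 ∧
    Measure.hausdorffMeasure ((n : ℝ) - 1) S ≠ ⊤ ∧
    ∀ j : Fin n, P (A j) = ENNReal.ofReal (μ j) :=
  stmt7_general n μ hμ0 hμ1 e he v hv S hS A hA P hP
end
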